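/- arXiv:0903.3109 — 5 statements merged into one kernel-verified Lean document; each statement's English description precedes it below -/
import Mathlib

section
/- If f : [0,1] → ℝ is a nonnegative convex C² function satisfying f(1-x) = f(x) for all x ∈ [0,1], then all Fourier coefficients of f are nonnegative: for every n ∈ ℤ, the integral ∫₀¹ f(x) e^{-2πinx} dx is a nonnegative real number. -/
open MeasureTheory Real Set

/-!
Write `e^{-2πinx} = cos 2πnx - i sin 2πnx`. The symmetry `f (1 - x) = f x` makes `f x sin 2πnx`
odd about `1/2`, so the imaginary part vanishes. For `n ≠ 0`, integrating the real part by parts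
twice (the boundary terms vanish since `sin 2πn = 0` and `cos 2πn = 1`) gives
`∫₀¹ f'' (1 - cos 2πnx) / (2πn)²`, which is nonnegative because convexity makes `f'` monotone,
hence `f'' ≥ 0`. For `n = 0` the coefficient is `∫₀¹ f ≥ 0`.
-/

theorem intervalIntegral.integral_eq_zero_of_reflect_eq_neg {g : ℝ → ℝ} {a b : ℝ}
    (hg : ∀ x ∈ uIcc a b, g (a + b - x) = -g x) : ∫ x in a..b, g x = 0 := by
  have hreflect : ∫ x in a..b, g (a + b - x) = ∫ x in a..b, g x := by
    rw [intervalIntegral.integral_comp_sub_left g, add_sub_cancel_right, add_sub_cancel_left]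
  rw [intervalIntegral.integral_congr hg, intervalIntegral.integral_neg] at hreflect
  linarith

theorem integral_mul_sin_eq_zero_of_symmetric {f : ℝ → ℝ}
    (hsym : ∀ x ∈ Icc (0:ℝ) 1, f (1 - x) = f x) (n : ℤ) :
    ∫ x in (0:ℝ)..1, f x * sin (2 * π * n * x) = 0 := by
  refine intervalIntegral.integral_eq_zero_of_reflect_eq_neg fun x hx => ?_
  rw [uIcc_of_le zero_le_one] at hx
  have hsin : sin (2 * π * n * (1 - x)) = -sin (2 * π * n * x) := by
    rw [← sin_int_mul_two_pi_sub]; ring_nf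
  rw [zero_add, hsym x hx, hsin, mul_neg]

theorem integral_ofReal_mul_exp_eq_cos_sub_sin_mul_I {f : ℝ → ℝ} {a b : ℝ}
    (hf : ContinuousOn f (uIcc a b)) (ξ : ℝ) :
    ∫ x in a..b, (f x : ℂ) * Complex.exp (-2 * π * Complex.I * ξ * x) =
      (∫ x in a..b, f x * cos (2 * π * ξ * x)) -
        (∫ x in a..b, f x * sin (2 * π * ξ * x)) * Complex.I := by
  have hcos : ContinuousOn (fun x => ((f x * cos (2 * π * ξ * x) : ℝ) : ℂ)) (uIcc a b) := by
    fun_prop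
  have hsin : ContinuousOn (fun x => ((f x * sin (2 * π * ξ * x) : ℝ) : ℂ) * Complex.I)
      (uIcc a b) := by
    fun_prop
  rw [← intervalIntegral.integral_ofReal, ← intervalIntegral.integral_ofReal,
    ← intervalIntegral.integral_mul_const,
    ← intervalIntegral.integral_sub hcos.intervalIntegrable hsin.intervalIntegrable]
  refine intervalIntegral.integral_congr fun x _ => ?_
  have harg : -2 * π * Complex.I * ξ * x = ((-(2 * π * ξ * x) : ℝ) : ℂ) * Complex.I := by
    push_cast; ring
  rw [harg, Complex.exp_mul_I, ← Complex.ofReal_cos, ← Complex.ofReal_sin, cos_neg, sin_neg]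
  push_cast
  ring

theorem integral_mul_cos_eq_neg_integral_deriv_mul_sin {f f' : ℝ → ℝ} {c : ℝ} (hc : c ≠ 0)
    (hsin : sin c = 0) (hf : ∀ x ∈ Icc (0:ℝ) 1, HasDerivWithinAt f (f' x) (Icc 0 1) x)
    (hf' : IntervalIntegrable f' volume 0 1) :
    ∫ x in (0:ℝ)..1, f x * cos (c * x) = -(∫ x in (0:ℝ)..1, f' x * sin (c * x)) / c := by
  have hanti : ∀ x ∈ uIcc (0:ℝ) 1,
      HasDerivWithinAt (fun y => sin (c * y) / c) (cos (c * x)) (uIcc 0 1) x := fun x _ =>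
    (((hasDerivAt_id x).const_mul c).sin.div_const c).hasDerivWithinAt.congr_deriv
      (by field_simp; rfl)
  rw [← uIcc_of_le zero_le_one] at hf
  rw [intervalIntegral.integral_mul_deriv_eq_deriv_mul_of_hasDerivWithinAt hf hanti hf'
    ((by fun_prop : Continuous fun x => cos (c * x)).intervalIntegrable 0 1),
    neg_div, ← intervalIntegral.integral_div]
  simp [hsin, mul_div_assoc]

theorem integral_mul_sin_eq_neg_integral_deriv_mul_one_sub_cos {f f' : ℝ → ℝ} {c : ℝ}
    (hc : c ≠ 0) (hcos : cos c = 1)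
    (hf : ∀ x ∈ Icc (0:ℝ) 1, HasDerivWithinAt f (f' x) (Icc 0 1) x)
    (hf' : IntervalIntegrable f' volume 0 1) :
    ∫ x in (0:ℝ)..1, f x * sin (c * x) = -(∫ x in (0:ℝ)..1, f' x * (1 - cos (c * x))) / c := by
  have hanti : ∀ x ∈ uIcc (0:ℝ) 1,
      HasDerivWithinAt (fun y => (1 - cos (c * y)) / c) (sin (c * x)) (uIcc 0 1) x := fun x _ =>
    ((((hasDerivAt_id x).const_mul c).cos.const_sub 1).div_const c).hasDerivWithinAt.congr_deriv
      (by field_simp; rfl)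
  rw [← uIcc_of_le zero_le_one] at hf
  rw [intervalIntegral.integral_mul_deriv_eq_deriv_mul_of_hasDerivWithinAt hf hanti hf'
    ((by fun_prop : Continuous fun x => sin (c * x)).intervalIntegrable 0 1),
    neg_div, ← intervalIntegral.integral_div]
  simp [hcos, mul_div_assoc]

theorem ConvexOn.integral_mul_cos_nonneg {f : ℝ → ℝ} (hconv : ConvexOn ℝ (Icc 0 1) f)
    (hC2 : ContDiffOn ℝ 2 f (Icc 0 1)) {c : ℝ} (hc : c ≠ 0) (hcos : cos c = 1) :
    0 ≤ ∫ x in (0:ℝ)..1, f x * cos (c * x) := by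
  have hud : UniqueDiffOn ℝ (Icc (0:ℝ) 1) := uniqueDiffOn_Icc zero_lt_one
  set f' := derivWithin f (Icc 0 1)
  set f'' := derivWithin f' (Icc 0 1)
  have hf : DifferentiableOn ℝ f (Icc 0 1) := hC2.differentiableOn (by norm_num)
  have hC1 : ContDiffOn ℝ 1 f' (Icc 0 1) := hC2.derivWithin hud (by norm_num)
  have hf' : DifferentiableOn ℝ f' (Icc 0 1) := hC1.differentiableOn one_ne_zero
  have hf''_cont : ContinuousOn f'' (Icc 0 1) :=
    (hC1.derivWithin (m := 0) hud le_rfl).continuousOn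
  have hf''_nonneg : ∀ x, 0 ≤ f'' x := fun _ =>
    (hconv.monotoneOn_derivWithin hf).derivWithin_nonneg
  have hsin : sin c = 0 := sin_eq_zero_iff_cos_eq.2 (Or.inl hcos)
  have hibp : ∫ x in (0:ℝ)..1, f x * cos (c * x) =
      (∫ x in (0:ℝ)..1, f'' x * (1 - cos (c * x))) / (c * c) := by
    rw [integral_mul_cos_eq_neg_integral_deriv_mul_sin hc hsin
        (fun x hx => (hf x hx).hasDerivWithinAt)
        (hC1.continuousOn.intervalIntegrable_of_Icc zero_le_one),
      integral_mul_sin_eq_neg_integral_deriv_mul_one_sub_cos hc hcos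
        (fun x hx => (hf' x hx).hasDerivWithinAt)
        (hf''_cont.intervalIntegrable_of_Icc zero_le_one)]
    ring
  rw [hibp]
  exact div_nonneg (intervalIntegral.integral_nonneg zero_le_one fun x _ =>
    mul_nonneg (hf''_nonneg x) (sub_nonneg.2 (cos_le_one _))) (mul_self_nonneg c)

/-- If `f : [0,1] → ℝ` is a nonnegative convex `C²` function with `f(1-x) = f(x)`,
then every Fourier coefficient `∫₀¹ f(x) e^{-2πinx} dx` is a nonnegative real number. -/
theorem fourier_coeff_nonneg_of_convex_symmetric (f : ℝ → ℝ)
    (hnonneg : ∀ x ∈ Set.Icc (0:ℝ) 1, 0 ≤ f x)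
    (hconv : ConvexOn ℝ (Set.Icc (0:ℝ) 1) f)
    (hC2 : ContDiffOn ℝ 2 f (Set.Icc (0:ℝ) 1))
    (hsym : ∀ x ∈ Set.Icc (0:ℝ) 1, f (1 - x) = f x) :
    ∀ n : ℤ, ∃ r : ℝ, 0 ≤ r ∧
      (∫ x in (0:ℝ)..1, (f x : ℂ) * Complex.exp (-2 * Real.pi * Complex.I * n * x)) = r := by
  intro n
  have hcos_nonneg : 0 ≤ ∫ x in (0:ℝ)..1, f x * cos (2 * π * n * x) := by
    rcases eq_or_ne n 0 with rfl | hn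
    · simpa using intervalIntegral.integral_nonneg zero_le_one hnonneg
    · exact hconv.integral_mul_cos_nonneg hC2 (by positivity)
        (by rw [show 2 * π * n = n * (2 * π) by ring]; exact cos_int_mul_two_pi n)
  refine ⟨_, hcos_nonneg, ?_⟩
  have hf : ContinuousOn f (uIcc 0 1) := by
    rw [uIcc_of_le zero_le_one]; exact hC2.continuousOn
  have hsplit := integral_ofReal_mul_exp_eq_cos_sub_sin_mul_I hf n
  push_cast at hsplit
  rw [hsplit, integral_mul_sin_eq_zero_of_symmetric hsym n]
  simp
end

section
/- Let f : 𝕋 → ℝ be given by f(x) = exp(-1/|x - 1/2| + 2) for x ≠ 1/2 and f(1/2) = 0. If P is a nonzero trigonometric polynomial and g is a measurable function on 𝕋 with f·g = P almost everywhere, then g ∉ L²(𝕋). -/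
open MeasureTheory

/-- The function `f(x) = exp(-1/|x - 1/2| + 2)` for `x ≠ 1/2`, `f(1/2) = 0`. -/
noncomputable def bumpFun : ℝ → ℝ := fun x =>
  if x = 1/2 then 0 else Real.exp (-(1 / |x - 1/2|) + 2)

/-!
Near `x = 1/2` the trigonometric polynomial `P` is analytic and not identically zero, so
`‖P x‖ ≥ C |x - 1/2| ^ m` for some order `m`. On the right of `1/2` this forces
`‖g x‖ = ‖P x‖ / f x ≥ C (x - 1/2) ^ m exp ((x - 1/2)⁻¹ - 2)`, and the exponential beats every
power: the right-hand side dominates a multiple of `(x - 1/2)⁻¹`. Hence `g` is not even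
integrable near `1/2`, let alone square integrable.
-/

open Filter Topology Set Real
open scoped Nat ENNReal

theorem inv_div_factorial_le_pow_mul_exp_inv (m : ℕ) {t : ℝ} (ht : 0 < t) :
    t⁻¹ / (m + 1)! ≤ t ^ m * exp t⁻¹ :=
  calc t⁻¹ / (m + 1)! = t ^ m * (t⁻¹ ^ (m + 1) / (m + 1)!) := by
        rw [inv_pow, pow_succ]
        field_simp
    _ ≤ t ^ m * exp t⁻¹ := by
        gcongr
        exact pow_div_factorial_le_exp _ (inv_nonneg.2 ht.le) _

theorem AnalyticAt.exists_mul_pow_le_norm {𝕜 E : Type*} [NontriviallyNormedField 𝕜]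
    [NormedAddCommGroup E] [NormedSpace 𝕜 E] {f : 𝕜 → E} {z₀ : 𝕜} (hf : AnalyticAt 𝕜 f z₀)
    (hne : ¬∀ᶠ z in 𝓝 z₀, f z = 0) :
    ∃ m : ℕ, ∃ C > 0, ∀ᶠ z in 𝓝 z₀, C * ‖z - z₀‖ ^ m ≤ ‖f z‖ := by
  obtain ⟨m, g, hg, hg₀, hfg⟩ := hf.exists_eventuallyEq_pow_smul_nonzero_iff.2 hne
  have hg₀ : 0 < ‖g z₀‖ := norm_pos_iff.2 hg₀
  refine ⟨m, ‖g z₀‖ / 2, by positivity, ?_⟩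
  filter_upwards [hfg, hg.continuousAt.norm.eventually (eventually_gt_nhds (half_lt_self hg₀))]
    with z hfz hgz
  rw [hfz, norm_smul, norm_pow, mul_comm]
  gcongr

theorem analyticOnNhd_trigPoly (s : Finset ℤ) (c : ℤ → ℂ) :
    AnalyticOnNhd ℝ
      (fun x : ℝ => ∑ n ∈ s, c n * Complex.exp (2 * Real.pi * Complex.I * n * (x : ℂ))) univ :=
  fun x _ => Finset.analyticAt_fun_sum _ fun _ _ => analyticAt_const.mul <|
    analyticAt_cexp.restrictScalars.comp <| analyticAt_const.mul <| Complex.ofRealCLM.analyticAt x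

theorem not_memLp_of_mul_inv_sub_le_norm {E : Type*} [NormedAddCommGroup E] {g : ℝ → E}
    {a b K : ℝ} {p : ℝ≥0∞} (hab : a < b) (hK : 0 < K) (hp : 1 ≤ p)
    (hg : ∀ᵐ x ∂volume.restrict (Ioo a b), K * (x - a)⁻¹ ≤ ‖g x‖) :
    ¬ MemLp g p (volume.restrict (Ioo a b)) := by
  intro hmem
  have hg_int : IntegrableOn g (Ioo a b) := memLp_one_iff_integrable.1 (hmem.mono_exponent hp)
  have hK_int : IntegrableOn (fun x => K * (x - a)⁻¹) (Ioo a b) := by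
    refine hg_int.norm.mono' (by fun_prop) ?_
    filter_upwards [hg, ae_restrict_mem measurableSet_Ioo] with x hx hxI
    rwa [Real.norm_of_nonneg (by have := sub_pos.2 hxI.1; positivity)]
  have : IntervalIntegrable (fun x => (x - a)⁻¹) volume a b := by
    rw [intervalIntegrable_iff_integrableOn_Ioo_of_le hab.le]
    simpa [IntegrableOn, hK.ne'] using hK_int.const_mul K⁻¹
  simp [hab.ne, left_mem_uIcc] at this

theorem bumpFun_of_one_half_lt {x : ℝ} (hx : 1/2 < x) : bumpFun x = exp (-(x - 1/2)⁻¹ + 2) := by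
  rw [bumpFun, if_neg hx.ne', abs_of_pos (sub_pos.2 hx), one_div]

theorem mul_inv_sub_le_norm_of_le_norm_bumpFun_mul {x C : ℝ} {m : ℕ} {z : ℂ} (hx : 1/2 < x)
    (hC : 0 ≤ C) (h : C * (x - 1/2) ^ m ≤ ‖(bumpFun x : ℂ) * z‖) :
    C * exp (-2) / (m + 1)! * (x - 1/2)⁻¹ ≤ ‖z‖ := by
  set t := x - 1/2
  have ht : 0 < t := sub_pos.2 hx
  rw [norm_mul, Complex.norm_real, bumpFun_of_one_half_lt hx, Real.norm_of_nonneg (exp_pos _).le,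
    ← div_le_iff₀' (exp_pos _)] at h
  calc C * exp (-2) / (m + 1)! * t⁻¹ = C * exp (-2) * (t⁻¹ / (m + 1)!) := by ring
    _ ≤ C * exp (-2) * (t ^ m * exp t⁻¹) := by
        gcongr
        exact inv_div_factorial_le_pow_mul_exp_inv m ht
    _ = C * t ^ m / exp (-t⁻¹ + 2) := by
        rw [exp_add, exp_neg, exp_neg]
        field_simp
    _ ≤ ‖z‖ := h

theorem not_memLp_of_bumpFun_mul_eq_trigPoly_general (s : Finset ℤ) (c : ℤ → ℂ)
    (P : ℝ → ℂ)
    (hP : P = fun x : ℝ => ∑ n ∈ s, c n * Complex.exp (2 * Real.pi * Complex.I * n * (x : ℂ)))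
    (hPne : P ≠ 0)
    (g : ℝ → ℂ)
    (h : (fun x => (bumpFun x : ℂ) * g x) =ᵐ[volume.restrict (Set.Icc (0:ℝ) 1)] P) :
    ¬ MemLp g 2 (volume.restrict (Set.Icc (0:ℝ) 1)) := by
  intro hmem
  have hP_an : AnalyticOnNhd ℝ P univ := hP ▸ analyticOnNhd_trigPoly s c
  have hne : ¬∀ᶠ x in 𝓝 (1/2 : ℝ), P x = 0 := fun h₀ =>
    hPne (hP_an.eq_of_eventuallyEq analyticOnNhd_const h₀)
  obtain ⟨m, C, hC, hP_ge⟩ := (hP_an _ (mem_univ _)).exists_mul_pow_le_norm hne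
  obtain ⟨b, hb, hbP⟩ := mem_nhdsGT_iff_exists_Ioo_subset.1 (nhdsWithin_le_nhds hP_ge)
  set u := min b 1
  have hu : 1/2 < u := lt_min hb (by norm_num)
  have hsub : Ioo (1/2) u ⊆ Icc 0 1 := fun x hx =>
    ⟨by linarith [hx.1], (hx.2.trans_le (min_le_right _ _)).le⟩
  refine not_memLp_of_mul_inv_sub_le_norm hu (by positivity : 0 < C * exp (-2) / (m + 1)!)
    one_le_two ?_ (Measure.restrict_restrict_of_subset hsub ▸ hmem.restrict (Ioo (1/2) u))
  filter_upwards [ae_restrict_of_ae_restrict_of_subset hsub h, ae_restrict_mem measurableSet_Ioo]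
    with x hx hxI
  have hPx : C * ‖x - 1/2‖ ^ m ≤ ‖P x‖ := hbP (Ioo_subset_Ioo_right (min_le_left _ _) hxI)
  rw [← hx, Real.norm_of_nonneg (sub_pos.2 hxI.1).le] at hPx
  exact mul_inv_sub_le_norm_of_le_norm_bumpFun_mul hxI.1 hC.le hPx

/-- If `P` is a nonzero trigonometric polynomial and `g` is measurable with
`bumpFun · g = P` almost everywhere on the circle (realized as `[0,1]`), then `g ∉ L²`. -/
theorem not_memLp_of_bumpFun_mul_eq_trigPoly (s : Finset ℤ) (c : ℤ → ℂ)
    (P : ℝ → ℂ)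
    (hP : P = fun x : ℝ => ∑ n ∈ s, c n * Complex.exp (2 * Real.pi * Complex.I * n * (x : ℂ)))
    (hPne : P ≠ 0)
    (g : ℝ → ℂ) (hgm : Measurable g)
    (h : (fun x => (bumpFun x : ℂ) * g x) =ᵐ[volume.restrict (Set.Icc (0:ℝ) 1)] P) :
    ¬ MemLp g 2 (volume.restrict (Set.Icc (0:ℝ) 1)) :=
  not_memLp_of_bumpFun_mul_eq_trigPoly_general s c P hP hPne g h
end

section
/- If unitary operators U₁ and U₂ on separable Hilbert spaces are quasi-similar (there exist bounded intertwining operators V : H₁ → H₂ and W : H₂ → H₁, both with dense range), then U₁ and U₂ are unitarily equivalent. -/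
/-!
A dense-range intertwiner `V` yields an intertwining isometry in the opposite direction through
its polar decomposition: `V x ↦ |V| x` extends by density to an isometry `H₂ → H₁`, and it
intertwines `U₂` with `U₁` because `|V| = √(V† V)` commutes with `U₁`. With isometries
`a : H₁ → H₂` and `b : H₂ → H₁` in hand, a Schröder–Bernstein argument finishes: let `G` be the
smallest closed `b a`-invariant subspace containing `(range b)ᗮ`. The map which is `b a` on `G`
and the identity on `Gᗮ` is an isometry of `H₁` onto `range b`, and it commutes with `U₁` because
everything in sight does; composing with `b⁻¹` gives the unitary equivalence.
-/

namespace Submodule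

section ClosedInvariantHull

variable {R M : Type*} [Semiring R] [AddCommMonoid M] [Module R M] [TopologicalSpace M]

def closedInvariantHull (φ : M →ₗ[R] M) (L : Submodule R M) : Submodule R M :=
  sInf {K | IsClosed (K : Set M) ∧ L ≤ K ∧ K ≤ K.comap φ}

variable (φ : M →ₗ[R] M) (L : Submodule R M)

theorem isClosed_closedInvariantHull : IsClosed (closedInvariantHull φ L : Set M) := by
  rw [closedInvariantHull, coe_sInf]
  exact isClosed_biInter fun K hK => hK.1

theorem le_closedInvariantHull : L ≤ closedInvariantHull φ L :=
  le_sInf fun _ hK => hK.2.1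

theorem closedInvariantHull_le {K : Submodule R M} (hK : IsClosed (K : Set M)) (hLK : L ≤ K)
    (hφK : K ≤ K.comap φ) : closedInvariantHull φ L ≤ K :=
  sInf_le ⟨hK, hLK, hφK⟩

theorem closedInvariantHull_le_comap :
    closedInvariantHull φ L ≤ (closedInvariantHull φ L).comap φ := fun _ hx =>
  mem_sInf.mpr fun K hK => hK.2.2 (mem_sInf.mp hx K hK)

theorem closedInvariantHull_le_comap_of_commute (T : M →L[R] M) (hφT : ∀ x, φ (T x) = T (φ x))
    (hTL : L ≤ L.comap (T : M →ₗ[R] M)) :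
    closedInvariantHull φ L ≤ (closedInvariantHull φ L).comap (T : M →ₗ[R] M) := by
  refine closedInvariantHull_le φ L ((isClosed_closedInvariantHull φ L).preimage T.continuous)
    (hTL.trans (comap_mono (le_closedInvariantHull φ L))) fun x hx => ?_
  simpa [← hφT] using closedInvariantHull_le_comap φ L hx

theorem map_closedInvariantHull_eq (e : M ≃L[R] M) (hφe : ∀ x, φ (e x) = e (φ x))
    (hL : L.map (e.toLinearEquiv : M →ₗ[R] M) = L) :
    (closedInvariantHull φ L).map (e.toLinearEquiv : M →ₗ[R] M) = closedInvariantHull φ L := by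
  have hφe_symm (x : M) : φ (e.symm x) = e.symm (φ x) :=
    e.injective (by rw [← hφe, e.apply_symm_apply, e.apply_symm_apply])
  have h := closedInvariantHull_le_comap_of_commute φ L e hφe (map_le_iff_le_comap.mp hL.le)
  have h_symm := closedInvariantHull_le_comap_of_commute φ L e.symm hφe_symm
    (map_le_iff_le_comap.mp ((map_symm_eq_iff e.toLinearEquiv).mpr hL).le)
  exact le_antisymm (map_le_iff_le_comap.mpr h) fun x hx =>
    ⟨e.symm x, h_symm hx, e.apply_symm_apply x⟩

end ClosedInvariantHull

variable {𝕜 E : Type*} [RCLike 𝕜] [NormedAddCommGroup E] [InnerProductSpace 𝕜 E]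

theorem starProjection_apply_comm_of_map_eq (K : Submodule 𝕜 E) [K.HasOrthogonalProjection]
    (U : E ≃ₗᵢ[𝕜] E) (hK : K.map (U.toLinearEquiv : E →ₗ[𝕜] E) = K) (x : E) :
    K.starProjection (U x) = U (K.starProjection x) := by
  refine eq_starProjection_of_mem_of_inner_eq_zero ?_ fun w hw => ?_
  · exact hK.le (mem_map_of_mem (K.starProjection_apply_mem x))
  · obtain ⟨v, hv, rfl⟩ := hK.symm ▸ hw
    rw [← map_sub]
    exact (U.inner_map_map _ _).trans (starProjection_inner_eq_zero x v hv)

instance [CompleteSpace E] (φ : E →ₗ[𝕜] E) (L : Submodule 𝕜 E) :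
    CompleteSpace (closedInvariantHull φ L) :=
  (isClosed_closedInvariantHull φ L).completeSpace_coe

end Submodule

namespace LinearIsometry

open Submodule

instance completeSpace_range {R E F : Type*} [Ring R] [NormedAddCommGroup E]
    [NormedAddCommGroup F] [Module R E] [Module R F] [CompleteSpace E] (f : E →ₗᵢ[R] F) :
    CompleteSpace (LinearMap.range f.toLinearMap) :=
  completeSpace_coe_iff_isComplete.mpr
    (by rw [LinearMap.coe_range]; exact f.isometry.isUniformInducing.isComplete_range)

theorem exists_linearIsometryEquiv_apply_eq_of_range_eq {R E F G : Type*} [Ring R]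
    [NormedAddCommGroup E] [NormedAddCommGroup F] [NormedAddCommGroup G]
    [Module R E] [Module R F] [Module R G] (f : E →ₗᵢ[R] G) (g : F →ₗᵢ[R] G)
    (h : LinearMap.range f.toLinearMap = LinearMap.range g.toLinearMap) :
    ∃ S : E ≃ₗᵢ[R] F, ∀ x, g (S x) = f x :=
  ⟨f.equivRange.trans ((LinearIsometryEquiv.ofEq _ _ h).trans g.equivRange.symm), fun x =>
    congrArg Subtype.val
      (g.equivRange.apply_symm_apply (LinearIsometryEquiv.ofEq _ _ h (f.equivRange x)))⟩

variable {𝕜 E : Type*} [RCLike 𝕜] [NormedAddCommGroup E] [InnerProductSpace 𝕜 E]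

noncomputable def orthogonalPiecewise (φ : E →ₗᵢ[𝕜] E) (G : Submodule 𝕜 E)
    [G.HasOrthogonalProjection] (hG : G ≤ G.comap φ.toLinearMap) : E →ₗᵢ[𝕜] E where
  toLinearMap := (Gᗮ.starProjection : E →ₗ[𝕜] E) + φ.toLinearMap ∘ₗ G.starProjection
  norm_map' x := by
    have hφx : φ (G.starProjection x) ∈ G := hG (G.starProjection_apply_mem x)
    have horth : inner 𝕜 (Gᗮ.starProjection x) (φ (G.starProjection x)) = 0 :=
      inner_left_of_mem_orthogonal (K := G) hφx (Gᗮ.starProjection_apply_mem x)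
    rw [← sq_eq_sq₀ (norm_nonneg _) (norm_nonneg _), norm_sq_eq_add_norm_sq_projection x G]
    change ‖Gᗮ.starProjection x + φ (G.starProjection x)‖ ^ 2 = _
    simp only [sq]
    rw [norm_add_sq_eq_norm_sq_add_norm_sq_of_inner_eq_zero _ _ horth, φ.norm_map, add_comm]
    rfl

section OrthogonalPiecewise

variable (φ : E →ₗᵢ[𝕜] E) (G : Submodule 𝕜 E) [G.HasOrthogonalProjection]
  (hG : G ≤ G.comap φ.toLinearMap)

theorem orthogonalPiecewise_apply_of_mem {x : E} (hx : x ∈ G) :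
    orthogonalPiecewise φ G hG x = φ x := by
  change Gᗮ.starProjection x + φ (G.starProjection x) = φ x
  rw [starProjection_orthogonal_apply_eq_zero hx, starProjection_eq_self_iff.mpr hx, zero_add]

theorem orthogonalPiecewise_apply_of_mem_orthogonal {x : E} (hx : x ∈ Gᗮ) :
    orthogonalPiecewise φ G hG x = x := by
  change Gᗮ.starProjection x + φ (G.starProjection x) = x
  rw [starProjection_eq_self_iff.mpr hx, (starProjection_apply_eq_zero_iff G).mpr hx, map_zero,
    add_zero]

theorem orthogonalPiecewise_apply_comm (U : E ≃ₗᵢ[𝕜] E) (hφU : ∀ x, φ (U x) = U (φ x))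
    (hUG : G.map (U.toLinearEquiv : E →ₗ[𝕜] E) = G) (x : E) :
    orthogonalPiecewise φ G hG (U x) = U (orthogonalPiecewise φ G hG x) := by
  change Gᗮ.starProjection (U x) + φ (G.starProjection (U x)) =
    U (Gᗮ.starProjection x + φ (G.starProjection x))
  rw [starProjection_apply_comm_of_map_eq G U hUG, starProjection_apply_comm_of_map_eq Gᗮ U
    ((map_orthogonal_equiv G U).trans (congrArg _ hUG)), hφU, map_add]

end OrthogonalPiecewise

variable [CompleteSpace E]

noncomputable def schroederBernstein (φ : E →ₗᵢ[𝕜] E) (M : Submodule 𝕜 E) : E →ₗᵢ[𝕜] E :=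
  orthogonalPiecewise φ (closedInvariantHull φ.toLinearMap Mᗮ) (closedInvariantHull_le_comap _ _)

variable (φ : E →ₗᵢ[𝕜] E) (M : Submodule 𝕜 E)

theorem orthogonal_range_schroederBernstein_inf_eq_bot :
    (LinearMap.range (schroederBernstein φ M).toLinearMap)ᗮ ⊓ M = ⊥ := by
  rw [eq_bot_iff]
  rintro w ⟨hw, hwM⟩
  set G := closedInvariantHull φ.toLinearMap Mᗮ
  have hw' (x : E) : inner 𝕜 (schroederBernstein φ M x) w = 0 :=
    (mem_orthogonal _ _).mp hw _ ⟨x, rfl⟩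
  have hwG : w ∈ G := by
    rw [← orthogonal_orthogonal G]
    intro y hy
    have := hw' y
    rwa [schroederBernstein, orthogonalPiecewise_apply_of_mem_orthogonal _ _ _ hy] at this
  have hφw (g : E) (hg : g ∈ G) : inner 𝕜 w (φ g) = 0 := by
    have := hw' g
    rwa [schroederBernstein, orthogonalPiecewise_apply_of_mem _ _ _ hg, inner_eq_zero_symm] at this
  -- `G ⊓ (𝕜 ∙ w)ᗮ` is again a closed `φ`-invariant subspace containing `Mᗮ`.
  have hGK : G ≤ G ⊓ (𝕜 ∙ w)ᗮ := by
    refine closedInvariantHull_le _ _ ((isClosed_closedInvariantHull _ _).inter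
      (isClosed_orthogonal _)) (le_inf (le_closedInvariantHull _ _) fun v hv =>
        mem_orthogonal_singleton_iff_inner_right.mpr (inner_right_of_mem_orthogonal hwM hv))
      fun x hx => ⟨closedInvariantHull_le_comap _ _ hx.1,
        mem_orthogonal_singleton_iff_inner_right.mpr (hφw x hx.1)⟩
  exact (mem_bot 𝕜).mpr
    (inner_self_eq_zero.mp (mem_orthogonal_singleton_iff_inner_right.mp (hGK hwG).2))

theorem range_schroederBernstein [M.HasOrthogonalProjection] (hφM : ∀ x, φ x ∈ M) :
    LinearMap.range (schroederBernstein φ M).toLinearMap = M := by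
  set G := closedInvariantHull φ.toLinearMap Mᗮ
  have hGM : Gᗮ ≤ M := by
    simpa [orthogonal_orthogonal] using orthogonal_le (le_closedInvariantHull φ.toLinearMap Mᗮ)
  have hle : LinearMap.range (schroederBernstein φ M).toLinearMap ≤ M := by
    rintro _ ⟨x, rfl⟩
    exact M.add_mem (hGM (Gᗮ.starProjection_apply_mem x)) (hφM _)
  have h := sup_orthogonal_inf_of_hasOrthogonalProjection hle
  rwa [orthogonal_range_schroederBernstein_inf_eq_bot, sup_bot_eq] at h

theorem schroederBernstein_apply_comm (U : E ≃ₗᵢ[𝕜] E) (hφU : ∀ x, φ (U x) = U (φ x))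
    (hUM : M.map (U.toLinearEquiv : E →ₗ[𝕜] E) = M) (x : E) :
    schroederBernstein φ M (U x) = U (schroederBernstein φ M x) :=
  orthogonalPiecewise_apply_comm φ _ _ U hφU (map_closedInvariantHull_eq φ.toLinearMap Mᗮ
    U.toContinuousLinearEquiv hφU ((map_orthogonal_equiv M U).trans (congrArg _ hUM))) x

theorem exists_linearIsometryEquiv_intertwining {F : Type*} [NormedAddCommGroup F]
    [InnerProductSpace 𝕜 F] [CompleteSpace F] (U₁ : E ≃ₗᵢ[𝕜] E) (U₂ : F ≃ₗᵢ[𝕜] F)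
    (a : E →ₗᵢ[𝕜] F) (ha : ∀ x, a (U₁ x) = U₂ (a x))
    (b : F →ₗᵢ[𝕜] E) (hb : ∀ y, b (U₂ y) = U₁ (b y)) :
    ∃ S : E ≃ₗᵢ[𝕜] F, ∀ x, S (U₁ x) = U₂ (S x) := by
  set M := LinearMap.range b.toLinearMap
  have hUM : M.map (U₁.toLinearEquiv : E →ₗ[𝕜] E) = M := by
    ext y
    simp only [M, mem_map, LinearMap.mem_range]
    constructor
    · rintro ⟨_, ⟨z, rfl⟩, rfl⟩
      exact ⟨U₂ z, hb z⟩
    · rintro ⟨z, rfl⟩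
      exact ⟨b (U₂.symm z), ⟨_, rfl⟩, by simp [← hb]⟩
  have hφU (x : E) : b.comp a (U₁ x) = U₁ (b.comp a x) := by simp [ha, hb]
  obtain ⟨S, hS⟩ := exists_linearIsometryEquiv_apply_eq_of_range_eq
    (schroederBernstein (b.comp a) M) b (range_schroederBernstein _ M fun x => ⟨a x, rfl⟩)
  refine ⟨S, fun x => b.injective ?_⟩
  rw [hS, schroederBernstein_apply_comm _ M U₁ hφU hUM, ← hS, hb]

end LinearIsometry

open ContinuousLinearMap

section PolarPart

variable {H K : Type*} [NormedAddCommGroup H] [InnerProductSpace ℂ H] [CompleteSpace H]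
  [NormedAddCommGroup K] [InnerProductSpace ℂ K] [CompleteSpace K]

theorem norm_sqrt_adjoint_comp_self_apply (V : H →L[ℂ] K) (x : H) :
    ‖CFC.sqrt (adjoint V ∘L V) x‖ = ‖V x‖ := by
  have hA : 0 ≤ adjoint V ∘L V := (nonneg_iff_isPositive _).mpr (isPositive_adjoint_comp_self V)
  have hsa : IsSelfAdjoint (CFC.sqrt (adjoint V ∘L V)) := (CFC.sqrt_nonneg _).isSelfAdjoint
  rw [← sq_eq_sq₀ (norm_nonneg _) (norm_nonneg _), apply_norm_sq_eq_inner_adjoint_left,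
    apply_norm_sq_eq_inner_adjoint_left, hsa.adjoint_eq, ← mul_def, CFC.sqrt_mul_sqrt_self _ hA]

theorem adjoint_intertwines_of_intertwines (U₁ : H ≃ₗᵢ[ℂ] H) (U₂ : K ≃ₗᵢ[ℂ] K) (V : H →L[ℂ] K)
    (hV : ∀ x, V (U₁ x) = U₂ (V x)) (y : K) : adjoint V (U₂ y) = U₁ (adjoint V y) := by
  refine ext_inner_right ℂ fun x => ?_
  rw [adjoint_inner_left, ← U₁.apply_symm_apply x, hV, U₂.inner_map_map, U₁.inner_map_map,
    adjoint_inner_left]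

theorem commute_sqrt_adjoint_comp_self (U₁ : H ≃ₗᵢ[ℂ] H) (U₂ : K ≃ₗᵢ[ℂ] K) (V : H →L[ℂ] K)
    (hV : ∀ x, V (U₁ x) = U₂ (V x)) :
    Commute (CFC.sqrt (adjoint V ∘L V)) (U₁ : H →L[ℂ] H) := by
  refine Commute.cfcₙ_nnreal (ContinuousLinearMap.ext fun x => ?_) NNReal.sqrt
  simp [hV, adjoint_intertwines_of_intertwines U₁ U₂ V hV]

theorem exists_linearIsometry_intertwining_of_denseRange (U₁ : H ≃ₗᵢ[ℂ] H) (U₂ : K ≃ₗᵢ[ℂ] K)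
    (V : H →L[ℂ] K) (hV : ∀ x, V (U₁ x) = U₂ (V x)) (hV_dense : DenseRange V) :
    ∃ r : K →ₗᵢ[ℂ] H, ∀ y, r (U₂ y) = U₁ (r y) := by
  set A := CFC.sqrt (adjoint V ∘L V)
  have hAV : ∀ x, ‖A x‖ = ‖V x‖ := norm_sqrt_adjoint_comp_self_apply V
  have hAU (x : H) : A (U₁ x) = U₁ (A x) :=
    DFunLike.congr_fun (commute_sqrt_adjoint_comp_self U₁ U₂ V hV).eq x
  set r := (A : H →ₗ[ℂ] H).extendOfNorm (V : H →ₗ[ℂ] K)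
  have hr (x : H) : r (V x) = A x :=
    LinearMap.extendOfNorm_eq hV_dense ⟨1, fun x => by simpa using (hAV x).le⟩ x
  have hr_norm (y : K) : ‖r y‖ = ‖y‖ :=
    hV_dense.induction_on y (isClosed_eq (by fun_prop) (by fun_prop)) fun x => by rw [hr, hAV]
  refine ⟨⟨r, hr_norm⟩, fun y => ?_⟩
  exact hV_dense.induction_on y (isClosed_eq (by fun_prop) (by fun_prop))
    fun x => by simp [← hV, hr, hAU]

end PolarPart

theorem unitary_quasiSimilar_implies_unitarilyEquivalent_general
    {H₁ H₂ : Type*}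
    [NormedAddCommGroup H₁] [InnerProductSpace ℂ H₁] [CompleteSpace H₁]
    [NormedAddCommGroup H₂] [InnerProductSpace ℂ H₂] [CompleteSpace H₂]
    (U₁ : H₁ ≃ₗᵢ[ℂ] H₁) (U₂ : H₂ ≃ₗᵢ[ℂ] H₂)
    (V : H₁ →L[ℂ] H₂) (hV : ∀ y, V (U₁ y) = U₂ (V y)) (hVdense : DenseRange V)
    (W : H₂ →L[ℂ] H₁) (hW : ∀ y, W (U₂ y) = U₁ (W y)) (hWdense : DenseRange W) :
    ∃ S : H₁ ≃ₗᵢ[ℂ] H₂, ∀ x, S (U₁ x) = U₂ (S x) := by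
  obtain ⟨a, ha⟩ := exists_linearIsometry_intertwining_of_denseRange U₂ U₁ W hW hWdense
  obtain ⟨b, hb⟩ := exists_linearIsometry_intertwining_of_denseRange U₁ U₂ V hV hVdense
  exact LinearIsometry.exists_linearIsometryEquiv_intertwining U₁ U₂ a ha b hb

/-- Quasi-similar unitary operators on separable Hilbert spaces are unitarily equivalent. -/
theorem unitary_quasiSimilar_implies_unitarilyEquivalent
    {H₁ H₂ : Type*}
    [NormedAddCommGroup H₁] [InnerProductSpace ℂ H₁] [CompleteSpace H₁]
    [TopologicalSpace.SeparableSpace H₁]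
    [NormedAddCommGroup H₂] [InnerProductSpace ℂ H₂] [CompleteSpace H₂]
    [TopologicalSpace.SeparableSpace H₂]
    (U₁ : H₁ ≃ₗᵢ[ℂ] H₁) (U₂ : H₂ ≃ₗᵢ[ℂ] H₂)
    (V : H₁ →L[ℂ] H₂) (hV : ∀ y, V (U₁ y) = U₂ (V y)) (hVdense : DenseRange V)
    (W : H₂ →L[ℂ] H₁) (hW : ∀ y, W (U₂ y) = U₁ (W y)) (hWdense : DenseRange W) :
    ∃ S : H₁ ≃ₗᵢ[ℂ] H₂, ∀ x, S (U₁ x) = U₂ (S x) :=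
  unitary_quasiSimilar_implies_unitarilyEquivalent_general U₁ U₂ V hV hVdense W hW hWdense
end

section
/- Let (Yₙ, 𝒞ₙ, νₙ), n ≥ 1, be probability spaces and let A be a measurable subset of the infinite product ∏ₙ Yₙ such that the function 1_A − ν(A) decomposes as ∑ₙ fₙ(yₙ) with fₙ ∈ L²₀(Yₙ, νₙ) (zero-mean, depending only on the n-th coordinate, with the sum converging in L²). Then at most one fₙ is nonzero. -/
/-!
Write `f_j` for `ω ↦ F j (ω j)` and suppose `f_m, f_n ≠ 0` with `m ≠ n`. Centering the sign of
`F m` (resp. `F n`) gives a bounded centered function `φ` of the `m`-th (resp. `ψ` of the `n`-th)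
coordinate with `a = E[f_m φ] > 0` (resp. `b = E[f_n ψ] > 0`); put `Φ = φ ψ`. By independence
`E[f_j f_k Φ]` vanishes unless `{j, k} = {m, n}`, where it is `a b`, so expanding `g = ∑ f_j` twice
in `L²` gives `E[g² Φ] = 2 a b`. On the other hand `g = 1_A - c` takes only two values, so
`g² = (1 - 2c) g + c (1 - c)`, and `E[g Φ] = E[Φ] = 0` give `E[g² Φ] = 0`.
-/

open MeasureTheory ProbabilityTheory
open scoped ENNReal

section WeightedInner

variable {α : Type*} [MeasurableSpace α] {μ : Measure α}

noncomputable def weightedInner (Φ : Lp ℝ ∞ μ) : Lp ℝ 2 μ →L[ℝ] Lp ℝ 2 μ →L[ℝ] ℝ :=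
  ((ContinuousLinearMap.mul ℝ ℝ).lpPairing μ 2 2).bilinearComp (.id ℝ _)
    ((ContinuousLinearMap.mul ℝ ℝ).holderL μ ∞ 2 2 Φ)

theorem weightedInner_apply {Φ : Lp ℝ ∞ μ} {P Q : Lp ℝ 2 μ} {φ p q : α → ℝ}
    (hΦ : Φ =ᵐ[μ] φ) (hP : P =ᵐ[μ] p) (hQ : Q =ᵐ[μ] q) :
    weightedInner Φ P Q = ∫ x, p x * (φ x * q x) ∂μ := by
  simp only [weightedInner, ContinuousLinearMap.bilinearComp_apply,
    ContinuousLinearMap.lpPairing_eq_integral, ContinuousLinearMap.id_apply]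
  refine integral_congr_ae ?_
  filter_upwards [hΦ, hP, hQ, (ContinuousLinearMap.mul ℝ ℝ).coeFn_holder (r := 2) Φ Q]
    with x hΦx hPx hQx hx
  simp [hx, hΦx, hPx, hQx]

theorem weightedInner_indicator_sub_const [IsFiniteMeasure μ] (Φ : Lp ℝ ∞ μ) {g : Lp ℝ 2 μ}
    {A : Set α} {c : ℝ} (hg : g =ᵐ[μ] fun x => A.indicator (fun _ => (1 : ℝ)) x - c) :
    weightedInner Φ g g = (1 - 2 * c) * weightedInner Φ g (Lp.const 2 μ 1) +
      c * (1 - c) * weightedInner Φ (Lp.const 2 μ 1) (Lp.const 2 μ 1) := by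
  set one := Lp.const 2 μ (1 : ℝ)
  have hone : ⇑one =ᵐ[μ] fun _ => (1 : ℝ) := Lp.coeFn_const 2 μ (1 : ℝ)
  have hcomb : ⇑((1 - 2 * c) • g + (c * (1 - c)) • one) =ᵐ[μ]
      fun x => (1 - 2 * c) * (A.indicator (fun _ => (1 : ℝ)) x - c) + c * (1 - c) := by
    filter_upwards [Lp.coeFn_add ((1 - 2 * c) • g) ((c * (1 - c)) • one),
      Lp.coeFn_smul (1 - 2 * c) g, Lp.coeFn_smul (c * (1 - c)) one, hg, hone]
      with x h1 h2 h3 h4 h5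
    rw [h1, Pi.add_apply, h2, h3, Pi.smul_apply, Pi.smul_apply, h4, h5, smul_eq_mul,
      smul_eq_mul, mul_one]
  have hΦ : Φ =ᵐ[μ] ⇑Φ := ae_eq_refl _
  calc weightedInner Φ g g = weightedInner Φ ((1 - 2 * c) • g + (c * (1 - c)) • one) one := by
        rw [weightedInner_apply hΦ hg hg, weightedInner_apply hΦ hcomb hone]
        congr 1; ext x
        by_cases hx : x ∈ A <;> simp [hx] <;> ring
    _ = _ := by simp

end WeightedInner

theorem ContinuousLinearMap.apply_apply_eq_sum_of_hasSum {ι κ 𝕜 E F G : Type*}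
    [NontriviallyNormedField 𝕜] [NormedAddCommGroup E] [NormedAddCommGroup F]
    [NormedAddCommGroup G] [NormedSpace 𝕜 E] [NormedSpace 𝕜 F] [NormedSpace 𝕜 G]
    (B : E →L[𝕜] F →L[𝕜] G) {f : ι → E} {g : κ → F} {x : E} {y : F}
    (hf : HasSum f x) (hg : HasSum g y) (s : Finset ι) (t : Finset κ)
    (hst : ∀ j k, j ∉ s ∨ k ∉ t → B (f j) (g k) = 0) :
    B x y = ∑ j ∈ s, ∑ k ∈ t, B (f j) (g k) := by
  have hrow : ∀ j, B (f j) y = ∑ k ∈ t, B (f j) (g k) := fun j =>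
    ((B (f j)).hasSum hg).unique
      (hasSum_sum_of_ne_finset_zero fun k hk => hst j k (Or.inr hk))
  refine ((B.flip y).hasSum hf).unique ?_
  simp only [flip_apply, hrow]
  exact hasSum_sum_of_ne_finset_zero fun j hj =>
    Finset.sum_eq_zero fun k _ => hst j k (Or.inl hj)

theorem exists_integral_mul_comp_pos {Ω : Type*} [MeasurableSpace Ω] {μ : Measure Ω}
    [IsProbabilityMeasure μ] {X : Ω → ℝ} (hX : Integrable X μ) (hX0 : ∫ ω, X ω ∂μ = 0)
    (hne : ¬ X =ᵐ[μ] 0) :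
    ∃ h : ℝ → ℝ, Measurable h ∧ (∀ t, |h t| ≤ 2) ∧ ∫ ω, h (X ω) ∂μ = 0 ∧
      0 < ∫ ω, X ω * h (X ω) ∂μ := by
  set s : ℝ → ℝ := fun t => if 0 ≤ t then 1 else -1
  have hs : Measurable s := Measurable.ite measurableSet_Ici measurable_const measurable_const
  have hs1 : ∀ t, |s t| ≤ 1 := fun t => by by_cases ht : 0 ≤ t <;> simp [s, ht]
  have hXs : ∀ t, t * s t = |t| := fun t => by
    by_cases ht : 0 ≤ t
    · simp [s, ht, abs_of_nonneg ht]
    · simp [s, ht, abs_of_neg (not_le.mp ht)]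
  have hsX : Integrable (fun ω => s (X ω)) μ :=
    Integrable.of_bound (hs.comp_aemeasurable hX.aemeasurable).aestronglyMeasurable 1
      (ae_of_all _ fun ω => hs1 _)
  set c := ∫ ω, s (X ω) ∂μ
  have hc : |c| ≤ 1 := by
    simpa using norm_integral_le_of_norm_le_const (μ := μ) (f := fun ω => s (X ω))
      (ae_of_all _ fun ω => hs1 (X ω))
  have habs : 0 < ∫ ω, |X ω| ∂μ := by
    refine (integral_nonneg fun ω => abs_nonneg (X ω)).lt_of_ne fun h0 => hne ?_
    filter_upwards [(integral_eq_zero_iff_of_nonneg (fun ω => abs_nonneg (X ω)) hX.abs).mp h0.symm]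
      with ω hω
    simpa using hω
  refine ⟨fun t => s t - c, hs.sub_const c, fun t => ?_, ?_, ?_⟩
  · linarith [abs_sub (s t) c, hs1 t]
  · simp [integral_sub hsX (integrable_const c), c]
  · calc 0 < ∫ ω, |X ω| ∂μ - c * ∫ ω, X ω ∂μ := by rw [hX0, mul_zero, sub_zero]; exact habs
      _ = ∫ ω, X ω * (s (X ω) - c) ∂μ := by
        rw [← integral_const_mul, ← integral_sub hX.abs (hX.const_mul c)]
        congr 1; ext ω; rw [mul_sub, hXs, mul_comm]

section Coordinates

variable {ι : Type*} {Y : ι → Type*} [∀ i, MeasurableSpace (Y i)]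

abbrev piExcept (i : ι) : MeasurableSpace (∀ k, Y k) :=
  ⨆ k ∈ ({i}ᶜ : Set ι), MeasurableSpace.comap (fun ω => ω k) inferInstance

theorem Measurable.comp_eval_piExcept {β : Type*} [MeasurableSpace β] {i k : ι}
    {u : Y k → β} (hu : Measurable u) (hk : k ≠ i) : Measurable[piExcept i] fun ω => u (ω k) :=
  hu.comp <| comap_measurable _ |>.mono (le_iSup₂_of_le k hk le_rfl) le_rfl

theorem piExcept_le (i : ι) : piExcept (Y := Y) i ≤ MeasurableSpace.pi :=
  iSup₂_le fun k _ => (measurable_pi_apply k).comap_le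

namespace ProbabilityTheory.iIndepFun

variable {μ : Measure (∀ k, Y k)}

theorem integral_apply_mul_eq_mul_integral (hindep : iIndepFun (fun i ω => ω i) μ) {i : ι}
    {X : Y i → ℝ} (hX : Measurable X) {Z : (∀ k, Y k) → ℝ} (hZ : Measurable[piExcept i] Z) :
    ∫ ω, X (ω i) * Z ω ∂μ = (∫ ω, X (ω i) ∂μ) * ∫ ω, Z ω ∂μ := by
  have hind : Indep (⨆ k ∈ ({i} : Set ι), MeasurableSpace.comap (fun ω => ω k) inferInstance)
      (piExcept i) μ :=
    indep_iSup_of_disjoint (fun k => (measurable_pi_apply k).comap_le)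
      ((iIndepFun_iff_iIndep _ _ _).mp hindep) disjoint_compl_right
  have hXZ : IndepFun (fun ω => X (ω i)) Z μ := by
    rw [IndepFun_iff_Indep]
    refine indep_of_indep_of_le_right (indep_of_indep_of_le_left hind ?_) hZ.comap_le
    exact (hX.comp (comap_measurable _)).comap_le.trans (le_iSup₂_of_le i rfl le_rfl)
  exact hXZ.integral_fun_mul_eq_mul_integral
    (hX.comp (measurable_pi_apply i)).aestronglyMeasurable
    (hZ.mono (piExcept_le i) le_rfl).aestronglyMeasurable

theorem integral_apply_mul_centered_pair_eq_zero (hindep : iIndepFun (fun i ω => ω i) μ)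
    {j m n : ι} (hmn : m ≠ n) {u : Y j → ℝ} {φ : Y m → ℝ} {ψ : Y n → ℝ}
    (hu : Measurable u) (hφ : Measurable φ) (hψ : Measurable ψ)
    (hφ0 : ∫ ω, φ (ω m) ∂μ = 0) (hψ0 : ∫ ω, ψ (ω n) ∂μ = 0) :
    ∫ ω, u (ω j) * (φ (ω m) * ψ (ω n)) ∂μ = 0 := by
  by_cases hjm : j = m
  · subst hjm
    calc _ = ∫ ω, ψ (ω n) * (u (ω j) * φ (ω j)) ∂μ := by congr 1; ext ω; ring
      _ = 0 := by
        rw [hindep.integral_apply_mul_eq_mul_integral hψ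
          ((hu.fun_mul hφ).comp_eval_piExcept hmn), hψ0, zero_mul]
  · calc _ = ∫ ω, φ (ω m) * (u (ω j) * ψ (ω n)) ∂μ := by congr 1; ext ω; ring
      _ = 0 := by
        rw [hindep.integral_apply_mul_eq_mul_integral hφ
          ((hu.comp_eval_piExcept hjm).fun_mul
            (hψ.comp_eval_piExcept hmn.symm)), hφ0, zero_mul]

theorem integral_apply_mul_centered_pair_mul_apply (hindep : iIndepFun (fun i ω => ω i) μ)
    [DecidableEq ι] {m n : ι} (hmn : m ≠ n) {F : ∀ k, Y k → ℝ} {φ : Y m → ℝ} {ψ : Y n → ℝ}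
    (hF : ∀ k, Measurable (F k)) (hφ : Measurable φ) (hψ : Measurable ψ)
    (hF0 : ∀ k, ∫ ω, F k (ω k) ∂μ = 0)
    (hφ0 : ∫ ω, φ (ω m) ∂μ = 0) (hψ0 : ∫ ω, ψ (ω n) ∂μ = 0) (j k : ι) :
    ∫ ω, F j (ω j) * (φ (ω m) * ψ (ω n) * F k (ω k)) ∂μ =
      if j = m ∧ k = n ∨ j = n ∧ k = m then
        (∫ ω, F m (ω m) * φ (ω m) ∂μ) * ∫ ω, F n (ω n) * ψ (ω n) ∂μ
      else 0 := by
  split_ifs with h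
  · rcases h with ⟨rfl, rfl⟩ | ⟨rfl, rfl⟩
    · calc _ = ∫ ω, F j (ω j) * φ (ω j) * (F k (ω k) * ψ (ω k)) ∂μ := by congr 1; ext ω; ring
        _ = _ := hindep.integral_apply_mul_eq_mul_integral ((hF j).fun_mul hφ)
          (((hF k).fun_mul hψ).comp_eval_piExcept hmn.symm)
    · calc _ = ∫ ω, F k (ω k) * φ (ω k) * (F j (ω j) * ψ (ω j)) ∂μ := by congr 1; ext ω; ring
        _ = _ := hindep.integral_apply_mul_eq_mul_integral ((hF k).fun_mul hφ)
          (((hF j).fun_mul hψ).comp_eval_piExcept hmn.symm)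
  -- Otherwise some coordinate carries a single factor, and that factor is centered.
  by_cases hj : m ≠ j ∧ n ≠ j ∧ k ≠ j
  · rw [hindep.integral_apply_mul_eq_mul_integral (hF j)
      (((hφ.comp_eval_piExcept hj.1).fun_mul (hψ.comp_eval_piExcept hj.2.1)).fun_mul
        ((hF k).comp_eval_piExcept hj.2.2)), hF0, zero_mul]
  by_cases hk : m ≠ k ∧ n ≠ k ∧ j ≠ k
  · calc _ = ∫ ω, F k (ω k) * (F j (ω j) * (φ (ω m) * ψ (ω n))) ∂μ := by congr 1; ext ω; ring
      _ = 0 := by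
        rw [hindep.integral_apply_mul_eq_mul_integral (hF k)
          (((hF j).comp_eval_piExcept hk.2.2).fun_mul
            ((hφ.comp_eval_piExcept hk.1).fun_mul (hψ.comp_eval_piExcept hk.2.1))), hF0, zero_mul]
  by_cases hm : j ≠ m ∧ k ≠ m
  · calc _ = ∫ ω, φ (ω m) * (F j (ω j) * ψ (ω n) * F k (ω k)) ∂μ := by congr 1; ext ω; ring
      _ = 0 := by
        rw [hindep.integral_apply_mul_eq_mul_integral hφ
          ((((hF j).comp_eval_piExcept hm.1).fun_mul (hψ.comp_eval_piExcept hmn.symm)).fun_mul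
            ((hF k).comp_eval_piExcept hm.2)), hφ0, zero_mul]
  have hn : j ≠ n ∧ k ≠ n := by grind
  calc _ = ∫ ω, ψ (ω n) * (F j (ω j) * φ (ω m) * F k (ω k)) ∂μ := by congr 1; ext ω; ring
    _ = 0 := by
      rw [hindep.integral_apply_mul_eq_mul_integral hψ
        ((((hF j).comp_eval_piExcept hn.1).fun_mul (hφ.comp_eval_piExcept hmn)).fun_mul
          ((hF k).comp_eval_piExcept hn.2)), hψ0, zero_mul]

end ProbabilityTheory.iIndepFun
end Coordinates

section CenteredPair

variable {ι : Type*} {Y : ι → Type*} [∀ i, MeasurableSpace (Y i)] {μ : Measure (∀ k, Y k)}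
  (hindep : iIndepFun (fun i ω => ω i) μ) {m n : ι} (hmn : m ≠ n)
  {φ : Y m → ℝ} {ψ : Y n → ℝ} (hφ : Measurable φ) (hψ : Measurable ψ)
  (hφ0 : ∫ ω, φ (ω m) ∂μ = 0) (hψ0 : ∫ ω, ψ (ω n) ∂μ = 0)
  {Φ : Lp ℝ ∞ μ} (hΦ : Φ =ᵐ[μ] fun ω => φ (ω m) * ψ (ω n))
  {F : ∀ k, Y k → ℝ} (hF : ∀ k, Measurable (F k))
  {f : ι → Lp ℝ 2 μ} (hf : ∀ k, f k =ᵐ[μ] fun ω => F k (ω k)) {g : Lp ℝ 2 μ} (hfg : HasSum f g)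
include hindep hmn hφ hψ hφ0 hψ0 hΦ

theorem weightedInner_apply_const_eq_zero [IsFiniteMeasure μ] {j : ι} {u : Y j → ℝ}
    (hu : Measurable u) {P : Lp ℝ 2 μ} (hP : P =ᵐ[μ] fun ω => u (ω j)) :
    weightedInner Φ P (Lp.const 2 μ 1) = 0 := by
  rw [weightedInner_apply hΦ hP (Lp.coeFn_const 2 μ 1)]
  simpa using hindep.integral_apply_mul_centered_pair_eq_zero hmn hu hφ hψ hφ0 hψ0

include hF hf hfg

theorem weightedInner_const_eq_zero_of_hasSum [IsFiniteMeasure μ] :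
    weightedInner Φ g (Lp.const 2 μ 1) = 0 :=
  (((weightedInner Φ).flip _).hasSum hfg).unique <| by
    simp [weightedInner_apply_const_eq_zero hindep hmn hφ hψ hφ0 hψ0 hΦ (hF _) (hf _)]

theorem weightedInner_self_of_hasSum [DecidableEq ι] (hF0 : ∀ k, ∫ ω, F k (ω k) ∂μ = 0) :
    weightedInner Φ g g =
      2 * ((∫ ω, F m (ω m) * φ (ω m) ∂μ) * ∫ ω, F n (ω n) * ψ (ω n) ∂μ) := by
  have hterm : ∀ j k, weightedInner Φ (f j) (f k) =
      if j = m ∧ k = n ∨ j = n ∧ k = m then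
        (∫ ω, F m (ω m) * φ (ω m) ∂μ) * ∫ ω, F n (ω n) * ψ (ω n) ∂μ
      else 0 := fun j k => by
    rw [weightedInner_apply hΦ (hf j) (hf k)]
    exact hindep.integral_apply_mul_centered_pair_mul_apply hmn hF hφ hψ hF0 hφ0 hψ0 j k
  rw [(weightedInner Φ).apply_apply_eq_sum_of_hasSum hfg hfg {m, n} {m, n} fun j k hjk => ?_]
  · simp [Finset.sum_pair hmn, hterm, hmn, Ne.symm hmn]
    ring
  · rw [hterm, if_neg]
    simp only [Finset.mem_insert, Finset.mem_singleton] at hjk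
    tauto

end CenteredPair

theorem at_most_one_nonzero_of_indicator_decomposition_general
    {Y : ℕ → Type*} [∀ n, MeasurableSpace (Y n)]
    (ν : ∀ n, Measure (Y n))
    (μ : Measure (∀ n, Y n)) [IsProbabilityMeasure μ]
    (hmarginal : ∀ n, μ.map (fun ω => ω n) = ν n)
    (hindep : iIndepFun (fun n => fun ω : ∀ k, Y k => ω n) μ)
    (F : ∀ n, Y n → ℝ) (hFmeas : ∀ n, Measurable (F n))
    (hFmean : ∀ n, ∫ y, F n y ∂(ν n) = 0)
    (fL : ℕ → Lp ℝ 2 μ)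
    (hfL : ∀ n, (fL n : (∀ k, Y k) → ℝ) =ᵐ[μ] fun ω => F n (ω n))
    (A : Set (∀ n, Y n))
    (g : Lp ℝ 2 μ) (hsum : HasSum fL g)
    (hg : (g : (∀ k, Y k) → ℝ) =ᵐ[μ] fun ω => A.indicator (fun _ => (1:ℝ)) ω - (μ A).toReal) :
    ∀ m n : ℕ, fL m ≠ 0 → fL n ≠ 0 → m = n := by
  intro m n hm hn
  by_contra hmn
  have hF0 : ∀ k, ∫ ω, F k (ω k) ∂μ = 0 := fun k => by
    rw [← hFmean k, ← hmarginal k, integral_map (measurable_pi_apply k).aemeasurable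
      (hFmeas k).aestronglyMeasurable]
  have htest : ∀ k, fL k ≠ 0 → ∃ h : ℝ → ℝ, Measurable h ∧ (∀ t, |h t| ≤ 2) ∧
      ∫ ω, h (F k (ω k)) ∂μ = 0 ∧ 0 < ∫ ω, F k (ω k) * h (F k (ω k)) ∂μ := fun k hk =>
    exists_integral_mul_comp_pos (((Lp.memLp (fL k)).integrable one_le_two).congr (hfL k))
      (hF0 k) fun h0 => hk (Lp.eq_zero_iff_ae_eq_zero.mpr ((hfL k).trans h0))
  obtain ⟨φ, hφ, hφb, hφ0, ha⟩ := htest m hm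
  obtain ⟨ψ, hψ, hψb, hψ0, hb⟩ := htest n hn
  have hφ' : Measurable fun y => φ (F m y) := hφ.comp (hFmeas m)
  have hψ' : Measurable fun y => ψ (F n y) := hψ.comp (hFmeas n)
  have hΦ : MemLp (fun ω => φ (F m (ω m)) * ψ (F n (ω n))) ∞ μ :=
    memLp_top_of_bound ((hφ'.comp (measurable_pi_apply m)).fun_mul
      (hψ'.comp (measurable_pi_apply n))).aestronglyMeasurable (2 * 2)
      (ae_of_all _ fun ω => by
        simpa [abs_mul] using mul_le_mul (hφb _) (hψb _) (abs_nonneg _) zero_le_two)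
  have htwo := weightedInner_indicator_sub_const (hΦ.toLp _) hg
  rw [weightedInner_self_of_hasSum hindep hmn hφ' hψ' hφ0 hψ0 hΦ.coeFn_toLp hFmeas hfL hsum hF0,
    weightedInner_const_eq_zero_of_hasSum hindep hmn hφ' hψ' hφ0 hψ0 hΦ.coeFn_toLp hFmeas hfL hsum,
    weightedInner_apply_const_eq_zero hindep hmn hφ' hψ' hφ0 hψ0 hΦ.coeFn_toLp
      (u := fun (_ : Y m) => (1 : ℝ)) measurable_const (Lp.coeFn_const 2 μ 1)] at htwo
  nlinarith [mul_pos ha hb]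

/-- If on a product of probability spaces (with independent coordinates) the centered
indicator `1_A − μ(A)` of a measurable set `A` decomposes in `L²` as a convergent sum
`∑ₙ fₙ(yₙ)` of zero-mean functions of the individual coordinates, then at most one `fₙ`
is nonzero. -/
theorem at_most_one_nonzero_of_indicator_decomposition
    {Y : ℕ → Type*} [∀ n, MeasurableSpace (Y n)]
    (ν : ∀ n, Measure (Y n)) [∀ n, IsProbabilityMeasure (ν n)]
    (μ : Measure (∀ n, Y n)) [IsProbabilityMeasure μ]
    (hmarginal : ∀ n, μ.map (fun ω => ω n) = ν n)
    (hindep : iIndepFun (fun n => fun ω : ∀ k, Y k => ω n) μ)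
    (F : ∀ n, Y n → ℝ) (hFmeas : ∀ n, Measurable (F n))
    (hFmean : ∀ n, ∫ y, F n y ∂(ν n) = 0)
    (fL : ℕ → Lp ℝ 2 μ)
    (hfL : ∀ n, (fL n : (∀ k, Y k) → ℝ) =ᵐ[μ] fun ω => F n (ω n))
    (A : Set (∀ n, Y n)) (hA : MeasurableSet A)
    (g : Lp ℝ 2 μ) (hsum : HasSum fL g)
    (hg : (g : (∀ k, Y k) → ℝ) =ᵐ[μ] fun ω => A.indicator (fun _ => (1:ℝ)) ω - (μ A).toReal) :
    ∀ m n : ℕ, fL m ≠ 0 → fL n ≠ 0 → m = n :=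
  at_most_one_nonzero_of_indicator_decomposition_general ν μ hmarginal hindep F hFmeas hFmean fL hfL
    A g hsum hg
end

section
/- Let S̄ be a unitary operator on a Hilbert space H, let U be an isometry on H commuting suitably so that J* = U* ∘ ∑_{n=0}^∞ 2^{-(n+1)} S̄^{-n} (strong convergence), where U* has nontrivial kernel. Then for every G ∈ ker U*, the vector F = −(1/2)·S̄^{-1}G + G lies in ker J*, and F ≠ 0 whenever G ≠ 0. -/
/-!
On `F = G - ½ S̄^{-1}G` the series `∑ₙ 2^{-(n+1)} S̄^{-n} F` telescopes to `½ G`, which `U*` kills;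
the tail terms vanish because `S̄^{-1}` is an isometry. The vector `G - ½ S̄^{-1}G` cannot vanish
for `G ≠ 0`, since `S̄^{-1}` preserves norms and `½ ≠ 1`.
-/

open Filter Topology

namespace LinearIsometryEquiv

variable {𝕜 E : Type*} [NormedField 𝕜]

theorem hasSum_smul_pow_apply_sub_smul [SeminormedAddCommGroup E] [NormedSpace 𝕜 E]
    (T : E ≃ₗᵢ[𝕜] E) {r : 𝕜} (hr : ‖r‖ < 1) (x : E) :
    HasSum (fun n : ℕ => r ^ (n + 1) • (T ^ n) (x - r • T x)) (r • x) := by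
  set f : ℕ → E := fun n => r ^ (n + 1) • (T ^ n) x with hf
  have hterm : ∀ n, r ^ (n + 1) • (T ^ n) (x - r • T x) = f n - f (n + 1) := by
    intro n
    simp only [hf, map_sub, map_smul, smul_sub, smul_smul, pow_succ T, coe_mul,
      Function.comp_apply, pow_succ r]
  have hgeom : Summable fun n : ℕ => ‖r‖ ^ (n + 1) :=
    (summable_geometric_of_lt_one (norm_nonneg r) hr).comp_injective (add_left_injective 1)
  have hnorm : ∀ y n, ‖r ^ (n + 1) • (T ^ n) y‖ = ‖r‖ ^ (n + 1) * ‖y‖ := by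
    intro y n
    rw [norm_smul, norm_pow, norm_map]
  have hf_zero : Tendsto f atTop (𝓝 0) := by
    rw [tendsto_zero_iff_norm_tendsto_zero]
    simpa [hf, hnorm] using hgeom.tendsto_atTop_zero.mul_const ‖x‖
  rw [hasSum_iff_tendsto_nat_of_summable_norm (by simpa only [hnorm] using hgeom.mul_right _)]
  simp_rw [hterm, Finset.sum_range_sub']
  simpa [hf] using (tendsto_const_nhds (x := f 0)).sub hf_zero

theorem sub_smul_apply_ne_zero [NormedAddCommGroup E] [NormedSpace 𝕜 E]
    (T : E ≃ₗᵢ[𝕜] E) {r : 𝕜} (hr : ‖r‖ ≠ 1) {x : E} (hx : x ≠ 0) : x - r • T x ≠ 0 := by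
  intro h
  have hnorm : ‖x‖ = ‖r‖ * ‖x‖ := by
    conv_lhs => rw [sub_eq_zero.mp h]
    rw [norm_smul, norm_map]
  exact hr (mul_eq_right₀ (norm_ne_zero_iff.mpr hx) |>.mp hnorm.symm)

end LinearIsometryEquiv

theorem kernel_of_geometric_markov_adjoint_general
    {H : Type*} [NormedAddCommGroup H] [InnerProductSpace ℂ H]
    (Sbar : H ≃ₗᵢ[ℂ] H) (Ustar Jstar : H →L[ℂ] H)
    (hJ : ∀ x : H, Jstar x = Ustar (∑' n : ℕ, ((1:ℂ) / 2 ^ (n + 1)) • (Sbar.symm ^ n) x)) :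
    ∀ G : H, Ustar G = 0 →
      Jstar (-((1:ℂ)/2) • Sbar.symm G + G) = 0 ∧
        (G ≠ 0 → -((1:ℂ)/2) • Sbar.symm G + G ≠ 0) := by
  intro G hG
  have hhalf : ‖(1 : ℂ) / 2‖ < 1 := by norm_num
  rw [neg_smul, neg_add_eq_sub]
  refine ⟨?_, Sbar.symm.sub_smul_apply_ne_zero hhalf.ne⟩
  simp_rw [hJ, ← one_div_pow, (Sbar.symm.hasSum_smul_pow_apply_sub_smul hhalf G).tsum_eq,
    map_smul, hG, smul_zero]

/-- If `J* = U* ∘ ∑ₙ 2^{-(n+1)} S̄^{-n}` with `U*` having nontrivial kernel, then for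
every `G ∈ ker U*` the vector `F = −(1/2)·S̄^{-1}G + G` lies in `ker J*`, and `F ≠ 0`
whenever `G ≠ 0`. -/
theorem kernel_of_geometric_markov_adjoint
    {H : Type*} [NormedAddCommGroup H] [InnerProductSpace ℂ H] [CompleteSpace H]
    (Sbar : H ≃ₗᵢ[ℂ] H) (Ustar Jstar : H →L[ℂ] H)
    (hker : ∃ G : H, G ≠ 0 ∧ Ustar G = 0)
    (hJ : ∀ x : H, Jstar x = Ustar (∑' n : ℕ, ((1:ℂ) / 2 ^ (n + 1)) • (Sbar.symm ^ n) x)) :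
    ∀ G : H, Ustar G = 0 →
      Jstar (-((1:ℂ)/2) • Sbar.symm G + G) = 0 ∧
        (G ≠ 0 → -((1:ℂ)/2) • Sbar.symm G + G ≠ 0) :=
  kernel_of_geometric_markov_adjoint_general Sbar Ustar Jstar hJ
end
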